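/- arXiv:2406.02464 — 5 statements merged into one kernel-verified Lean document; each statement's English description precedes it below -/
import Mathlib

section
/- If there exist environments e and j with πᵉ₁ + πʲ₀ > 1, then the width of the cross-environment bounds b⁺ − b⁻ is strictly less than s2 − s1 (the width of the Manski bound), assuming s1 < s2. -/
theorem Finset.inf'_sub_sup'_le {ι α : Type*} [AddCommGroup α] [Lattice α] [IsOrderedAddMonoid α]
    {s : Finset ι} (hs : s.Nonempty) (f g : ι → α) {i : ι} (hi : i ∈ s) :
    s.inf' hs f - s.sup' hs g ≤ f i - g i :=
  sub_le_sub (Finset.inf'_le f hi) (Finset.le_sup' g hi)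

theorem manski_pair_width (p1 m1 p0 m0 s1 s2 : ℝ) :
    (p1 * m1 + (1 - p1) * s2 - p0 * m0 - (1 - p0) * s1)
      - (p1 * m1 + (1 - p1) * s1 - p0 * m0 - (1 - p0) * s2)
      = (2 - p1 - p0) * (s2 - s1) := by
  ring

theorem manski_pair_width_lt {p1 p0 s1 s2 : ℝ} (m1 m0 : ℝ) (hs : s1 < s2) (hp : 1 < p1 + p0) :
    (p1 * m1 + (1 - p1) * s2 - p0 * m0 - (1 - p0) * s1)
      - (p1 * m1 + (1 - p1) * s1 - p0 * m0 - (1 - p0) * s2)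
      < s2 - s1 := by
  rw [manski_pair_width]
  nlinarith

theorem stmt_4_general {ι : Type*} [Fintype ι] [Nonempty ι]
    (π1 π0 μ1 μ0 : ι → ℝ) (s1 s2 : ℝ) (hs : s1 < s2)
    (hexists : ∃ e j, 1 < π1 e + π0 j) :
    (Finset.univ : Finset (ι × ι)).inf' Finset.univ_nonempty (fun p =>
        π1 p.1 * μ1 p.1 + (1 - π1 p.1) * s2
          - π0 p.2 * μ0 p.2 - (1 - π0 p.2) * s1)
      - (Finset.univ : Finset (ι × ι)).sup' Finset.univ_nonempty (fun p =>
        π1 p.1 * μ1 p.1 + (1 - π1 p.1) * s1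
          - π0 p.2 * μ0 p.2 - (1 - π0 p.2) * s2)
      < s2 - s1 := by
  obtain ⟨e, j, hej⟩ := hexists
  exact (Finset.inf'_sub_sup'_le _ _ _ (Finset.mem_univ (e, j))).trans_lt
    (manski_pair_width_lt (μ1 e) (μ0 j) hs hej)

/-- Improvement over Manski bounds: if some pair of environments satisfies
πᵉ₁ + πʲ₀ > 1, then b⁺ − b⁻ < s2 − s1. -/
theorem stmt_4 {ι : Type*} [Fintype ι] [Nonempty ι]
    (π1 π0 μ1 μ0 : ι → ℝ) (s1 s2 : ℝ) (hs : s1 < s2)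
    (hπ1 : ∀ e, 0 ≤ π1 e ∧ π1 e ≤ 1) (hπ0 : ∀ e, 0 ≤ π0 e ∧ π0 e ≤ 1)
    (hexists : ∃ e j, 1 < π1 e + π0 j) :
    (Finset.univ : Finset (ι × ι)).inf' Finset.univ_nonempty (fun p =>
        π1 p.1 * μ1 p.1 + (1 - π1 p.1) * s2
          - π0 p.2 * μ0 p.2 - (1 - π0 p.2) * s1)
      - (Finset.univ : Finset (ι × ι)).sup' Finset.univ_nonempty (fun p =>
        π1 p.1 * μ1 p.1 + (1 - π1 p.1) * s1
          - π0 p.2 * μ0 p.2 - (1 - π0 p.2) * s2)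
      < s2 - s1 :=
  stmt_4_general π1 π0 μ1 μ0 s1 s2 hs hexists
end

section
/- Let E ∈ {0,...,k} be a random environment, Ỹ an integrable random variable, δₗ = P(E = ℓ) > 0 for ℓ ∈ {e, j}, rₗ = E[Ỹ | E = ℓ], and suppose estimated functions satisfy r̂ₑ = rₑ and r̂ⱼ = rⱼ. Then the RA pseudo-outcome B^RA = 1{E=e}(Ỹ − r̂ⱼ) + 1{E=j}(r̂ₑ − Ỹ) + 1{E≠e}1{E≠j}(r̂ₑ − r̂ⱼ) satisfies E[B^RA] = rₑ − rⱼ. -/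
open MeasureTheory

/-- Consistency of the CB-RA-learner (unconditional version). -/
theorem stmt_6 {Ω : Type*} [MeasurableSpace Ω] (P : Measure Ω) [IsProbabilityMeasure P]
    (k : ℕ) (E : Ω → ℕ) (Yt : Ω → ℝ) (e j : ℕ)
    (hE : Measurable E) (hEk : ∀ ω, E ω ≤ k) (hek : e ≤ k) (hjk : j ≤ k) (hej : e ≠ j)
    (hYt : Integrable Yt P)
    (δe δj re rj rhate rhatj : ℝ)
    (hδe : δe = (P {ω | E ω = e}).toReal) (hδj : δj = (P {ω | E ω = j}).toReal)
    (hδe0 : 0 < δe) (hδj0 : 0 < δj)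
    (hre : re = (∫ ω in {ω | E ω = e}, Yt ω ∂P) / δe)
    (hrj : rj = (∫ ω in {ω | E ω = j}, Yt ω ∂P) / δj)
    (hhe : rhate = re) (hhj : rhatj = rj) :
    ∫ ω, ((if E ω = e then (1 : ℝ) else 0) * (Yt ω - rhatj)
        + (if E ω = j then (1 : ℝ) else 0) * (rhate - Yt ω)
        + (if E ω ≠ e then (1 : ℝ) else 0) * (if E ω ≠ j then (1 : ℝ) else 0)
            * (rhate - rhatj)) ∂P
      = re - rj := by
  rw [hhe, hhj]
  set Se : Set Ω := {ω | E ω = e} with hSe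
  set Sj : Set Ω := {ω | E ω = j} with hSj
  have mSe : MeasurableSet Se := hE (measurableSet_singleton e)
  have mSj : MeasurableSet Sj := hE (measurableSet_singleton j)
  have hdisj : Disjoint Se Sj := by
    rw [Set.disjoint_left]
    intro ω he hj
    exact hej (by rw [← he, ← hj])
  -- rewrite integrand as sum of indicators
  have hfun : ∀ ω, ((if E ω = e then (1 : ℝ) else 0) * (Yt ω - rj)
        + (if E ω = j then (1 : ℝ) else 0) * (re - Yt ω)
        + (if E ω ≠ e then (1 : ℝ) else 0) * (if E ω ≠ j then (1 : ℝ) else 0)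
            * (re - rj))
      = Se.indicator (fun ω => Yt ω - rj) ω + Sj.indicator (fun ω => re - Yt ω) ω
        + (Se ∪ Sj)ᶜ.indicator (fun _ => re - rj) ω := by
    intro ω
    by_cases he : E ω = e <;> by_cases hj : E ω = j <;>
      simp [Set.indicator_apply, hSe, hSj, he, hj] <;> ring
  have iYe : IntegrableOn Yt Se P := hYt.integrableOn
  have iYj : IntegrableOn Yt Sj P := hYt.integrableOn
  have i1 : Integrable (Se.indicator (fun ω => Yt ω - rj)) P := by
    exact ((hYt.sub (integrable_const rj)).integrableOn).integrable_indicator mSe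
  have i2 : Integrable (Sj.indicator (fun ω => re - Yt ω)) P := by
    exact (((integrable_const re).sub hYt).integrableOn).integrable_indicator mSj
  have i3 : Integrable ((Se ∪ Sj)ᶜ.indicator (fun _ : Ω => re - rj)) P := by
    exact (integrable_const _).integrableOn.integrable_indicator (mSe.union mSj).compl
  have hIe : ∫ ω in Se, Yt ω ∂P = re * δe := by
    rw [hre]; field_simp
  have hIj : ∫ ω in Sj, Yt ω ∂P = rj * δj := by
    rw [hrj]; field_simp
  have hmeas_ne_top : P Se ≠ ⊤ := measure_ne_top _ _
  have hcompl : (P (Se ∪ Sj)ᶜ).toReal = 1 - δe - δj := by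
    rw [measure_compl (mSe.union mSj) (measure_ne_top _ _), measure_union hdisj mSj,
      measure_univ]
    rw [ENNReal.toReal_sub_of_le (by
      have := measure_mono (Set.subset_univ (Se ∪ Sj)) (μ := P)
      rwa [measure_union hdisj mSj, measure_univ] at this) (by simp)]
    rw [ENNReal.toReal_add (measure_ne_top _ _) (measure_ne_top _ _)]
    simp [hδe, hδj]; ring
  calc ∫ ω, ((if E ω = e then (1 : ℝ) else 0) * (Yt ω - rj)
        + (if E ω = j then (1 : ℝ) else 0) * (re - Yt ω)
        + (if E ω ≠ e then (1 : ℝ) else 0) * (if E ω ≠ j then (1 : ℝ) else 0)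
            * (re - rj)) ∂P
      = ∫ ω, (Se.indicator (fun ω => Yt ω - rj) ω + Sj.indicator (fun ω => re - Yt ω) ω
        + (Se ∪ Sj)ᶜ.indicator (fun _ => re - rj) ω) ∂P := by
        exact integral_congr_ae (Filter.Eventually.of_forall hfun)
    _ = (∫ ω, Se.indicator (fun ω => Yt ω - rj) ω ∂P)
        + (∫ ω, Sj.indicator (fun ω => re - Yt ω) ω ∂P)
        + ∫ ω, (Se ∪ Sj)ᶜ.indicator (fun _ => re - rj) ω ∂P := by
        have h12 := integral_add i1 i2
        have h123 := integral_add (i1.add i2) i3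
        simp only [Pi.add_apply] at h12 h123
        rw [h123, h12]
    _ = (re * δe - rj * δe) + (re * δj - rj * δj) + (re - rj) * (1 - δe - δj) := by
        rw [integral_indicator mSe, integral_indicator mSj,
          integral_indicator (mSe.union mSj).compl]
        rw [integral_sub iYe (integrable_const rj).integrableOn,
          integral_sub (integrable_const re).integrableOn iYj,
          hIe, hIj, setIntegral_const, setIntegral_const, setIntegral_const,
          measureReal_def, measureReal_def, measureReal_def, ← hδe, ← hδj, hcompl]
        simp only [smul_eq_mul]
        ring
    _ = re - rj := by ring
end

section
/- Let E be a random environment with δₗ = P(E = ℓ) > 0 for ℓ ∈ {e, j}, Ỹ integrable, rₗ = E[Ỹ | E = ℓ]. Define B^DR = (1{E=e}/δ̂ₑ − 1{E=j}/δ̂ⱼ)·Ỹ + (1 − 1{E=e}/δ̂ₑ)·r̂ₑ − (1 − 1{E=j}/δ̂ⱼ)·r̂ⱼ with δ̂ₑ, δ̂ⱼ > 0. If either (δ̂ₑ = δₑ and δ̂ⱼ = δⱼ) or (r̂ₑ = rₑ and r̂ⱼ = rⱼ), then E[B^DR] = rₑ − rⱼ. -/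
open MeasureTheory

/-- Double robustness of the CB-DR-learner (unconditional version). -/
theorem stmt_8 {Ω : Type*} [MeasurableSpace Ω] (P : Measure Ω) [IsProbabilityMeasure P]
    (E : Ω → ℕ) (Yt : Ω → ℝ) (e j : ℕ)
    (hE : Measurable E) (hej : e ≠ j)
    (hYt : Integrable Yt P)
    (δe δj δhate δhatj re rj rhate rhatj : ℝ)
    (hδe : δe = (P {ω | E ω = e}).toReal) (hδj : δj = (P {ω | E ω = j}).toReal)
    (hδe0 : 0 < δe) (hδj0 : 0 < δj)
    (hδhate0 : 0 < δhate) (hδhatj0 : 0 < δhatj)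
    (hre : re = (∫ ω in {ω | E ω = e}, Yt ω ∂P) / δe)
    (hrj : rj = (∫ ω in {ω | E ω = j}, Yt ω ∂P) / δj)
    (hdr : (δhate = δe ∧ δhatj = δj) ∨ (rhate = re ∧ rhatj = rj)) :
    ∫ ω, (((if E ω = e then (1 : ℝ) else 0) / δhate
            - (if E ω = j then (1 : ℝ) else 0) / δhatj) * Yt ω
        + (1 - (if E ω = e then (1 : ℝ) else 0) / δhate) * rhate
        - (1 - (if E ω = j then (1 : ℝ) else 0) / δhatj) * rhatj) ∂P
      = re - rj := by
  have hA : MeasurableSet {ω | E ω = e} := hE (measurableSet_singleton e)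
  have hB : MeasurableSet {ω | E ω = j} := hE (measurableSet_singleton j)
  set A := {ω | E ω = e}
  set B := {ω | E ω = j}
  -- rewrite the integrand
  have hfun : ∀ ω, (((if E ω = e then (1 : ℝ) else 0) / δhate
            - (if E ω = j then (1 : ℝ) else 0) / δhatj) * Yt ω
        + (1 - (if E ω = e then (1 : ℝ) else 0) / δhate) * rhate
        - (1 - (if E ω = j then (1 : ℝ) else 0) / δhatj) * rhatj)
      = (1 / δhate) * A.indicator (fun ω => Yt ω - rhate) ω
        - (1 / δhatj) * B.indicator (fun ω => Yt ω - rhatj) ω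
        + (rhate - rhatj) := by
    intro ω
    by_cases he : E ω = e <;> by_cases hj : E ω = j <;>
      simp [A, B, Set.indicator, he, hj, hej, Ne.symm hej] <;> ring
  have hIA : Integrable (A.indicator (fun ω => Yt ω - rhate)) P :=
    (hYt.sub (integrable_const rhate)).indicator hA
  have hIB : Integrable (B.indicator (fun ω => Yt ω - rhatj)) P :=
    (hYt.sub (integrable_const rhatj)).indicator hB
  have key : ∫ ω, (((if E ω = e then (1 : ℝ) else 0) / δhate
            - (if E ω = j then (1 : ℝ) else 0) / δhatj) * Yt ω
        + (1 - (if E ω = e then (1 : ℝ) else 0) / δhate) * rhate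
        - (1 - (if E ω = j then (1 : ℝ) else 0) / δhatj) * rhatj) ∂P
      = (1 / δhate) * ∫ ω, A.indicator (fun ω => Yt ω - rhate) ω ∂P
        - (1 / δhatj) * ∫ ω, B.indicator (fun ω => Yt ω - rhatj) ω ∂P
        + (rhate - rhatj) := by
    simp_rw [hfun]
    have h1 : Integrable (fun ω => 1 / δhate * A.indicator (fun ω => Yt ω - rhate) ω
        - 1 / δhatj * B.indicator (fun ω => Yt ω - rhatj) ω) P :=
      (hIA.const_mul _).sub (hIB.const_mul _)
    rw [integral_add h1 (integrable_const _),
      integral_sub (hIA.const_mul _) (hIB.const_mul _),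
      integral_const_mul, integral_const_mul, integral_const]
    simp
  have hAint : ∫ ω, A.indicator (fun ω => Yt ω - rhate) ω ∂P = re * δe - rhate * δe := by
    rw [integral_indicator hA,
      integral_sub hYt.integrableOn (integrableOn_const (measure_ne_top P A)),
      setIntegral_const]
    rw [hre, Measure.real, ← hδe]
    field_simp
    ring
  have hBint : ∫ ω, B.indicator (fun ω => Yt ω - rhatj) ω ∂P = rj * δj - rhatj * δj := by
    rw [integral_indicator hB,
      integral_sub hYt.integrableOn (integrableOn_const (measure_ne_top P B)),
      setIntegral_const]
    rw [hrj, Measure.real, ← hδj]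
    field_simp
    ring
  rw [key, hAint, hBint]
  rcases hdr with ⟨h1, h2⟩ | ⟨h1, h2⟩
  · subst h1; subst h2; field_simp; ring
  · subst h1; subst h2; ring
end

section
/- Let (Ω, 𝔽, P) be a probability space, A : Ω → {0,1} measurable, Y(1) an integrable random variable with s1 ≤ Y(1) ≤ s2 a.s., π = P(A=1) with 0 < π < 1, μ̃ = E[Y(1)], and μ = E[Y(1) | A=1]. Then π·μ + (1−π)·s1 ≤ μ̃ ≤ π·μ + (1−π)·s2. -/
open MeasureTheory

/-- Measure-theoretic version of Manski's Lemma 1. -/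
theorem stmt_12 {Ω : Type*} [MeasurableSpace Ω] (P : Measure Ω) [IsProbabilityMeasure P]
    (A Y1 : Ω → ℝ) (s1 s2 π μt μ : ℝ)
    (hA : Measurable A) (hA01 : ∀ ω, A ω = 0 ∨ A ω = 1)
    (hY1 : Integrable Y1 P)
    (hY1b : ∀ᵐ ω ∂P, s1 ≤ Y1 ω ∧ Y1 ω ≤ s2)
    (hπ : π = (P {ω | A ω = 1}).toReal)
    (hπ0 : 0 < π) (hπ1 : π < 1)
    (hμt : μt = ∫ ω, Y1 ω ∂P)
    (hμ : μ = (∫ ω in {ω | A ω = 1}, Y1 ω ∂P) / π) :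
    π * μ + (1 - π) * s1 ≤ μt ∧ μt ≤ π * μ + (1 - π) * s2 := by
  set s : Set Ω := {ω | A ω = 1} with hsdef
  have hs : MeasurableSet s := hA (measurableSet_singleton 1)
  have hπμ : π * μ = ∫ ω in s, Y1 ω ∂P := by
    rw [hμ]; field_simp
  have hsplit : μt = (∫ ω in s, Y1 ω ∂P) + ∫ ω in sᶜ, Y1 ω ∂P := by
    rw [hμt, ← integral_add_compl hs hY1]
  have hPc : (P sᶜ).toReal = 1 - π := by
    rw [prob_compl_eq_one_sub hs, hπ]
    rw [ENNReal.toReal_sub_of_le (prob_le_one) (by simp)]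
    simp
  have hint : Integrable Y1 (P.restrict sᶜ) := hY1.restrict
  have hb1 : ∀ᵐ ω ∂(P.restrict sᶜ), s1 ≤ Y1 ω := (ae_restrict_of_ae hY1b).mono fun ω h => h.1
  have hb2 : ∀ᵐ ω ∂(P.restrict sᶜ), Y1 ω ≤ s2 := (ae_restrict_of_ae hY1b).mono fun ω h => h.2
  have hlo : (1 - π) * s1 ≤ ∫ ω in sᶜ, Y1 ω ∂P := by
    have := integral_mono_ae (integrable_const s1) hint hb1
    rwa [integral_const, smul_eq_mul, measureReal_restrict_apply_univ, measureReal_def, hPc] at this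
  have hhi : ∫ ω in sᶜ, Y1 ω ∂P ≤ (1 - π) * s2 := by
    have := integral_mono_ae hint (integrable_const s2) hb2
    rwa [integral_const, smul_eq_mul, measureReal_restrict_apply_univ, measureReal_def, hPc] at this
  constructor <;> rw [hsplit, hπμ] <;> linarith
end

section
/- Consequently, the cross-environment upper bound satisfies b⁺(e,j) = E[Ỹ | E = e] − E[Ỹ | E = j], where b⁺(e,j) = π₁ᵉμ₁ᵉ + (1−π₁ᵉ)s2 − π₀ʲμ₀ʲ − (1−π₀ʲ)s1. -/
open MeasureTheory

lemma aux_int {Ω : Type*} [MeasurableSpace Ω] (P : Measure Ω) [IsFiniteMeasure P]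
    (A Y : Ω → ℝ) (c : ℝ) (hA : Measurable A) (hA01 : ∀ ω, A ω = 0 ∨ A ω = 1)
    (hY : Integrable Y P) (S : Set Ω) :
    ∫ ω in S, (A ω * Y ω + (1 - A ω) * c) ∂P
      = (∫ ω in {ω | A ω = 1} ∩ S, Y ω ∂P) + c * (P ({ω | A ω = 0} ∩ S)).toReal := by
  have h1 : MeasurableSet {ω | A ω = 1} := hA (measurableSet_singleton 1)
  have h0 : MeasurableSet {ω | A ω = 0} := hA (measurableSet_singleton 0)
  have e1 : (fun ω => A ω * Y ω) = Set.indicator {ω | A ω = 1} Y := by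
    funext ω
    rcases hA01 ω with h | h <;>
      simp [Set.indicator_apply, Set.mem_setOf_eq, h]
  have e0 : (fun ω => (1 - A ω) * c) = Set.indicator {ω | A ω = 0} (fun _ => c) := by
    funext ω
    rcases hA01 ω with h | h <;>
      simp [Set.indicator_apply, Set.mem_setOf_eq, h]
  have i1 : IntegrableOn (fun ω => A ω * Y ω) S P := by
    rw [e1]; exact (hY.indicator h1).integrableOn
  have i0 : IntegrableOn (fun ω => (1 - A ω) * c) S P := by
    rw [e0]; exact ((integrable_const c).indicator h0).integrableOn
  rw [integral_add i1 i0]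
  congr 1
  · rw [show (fun ω => A ω * Y ω) = Set.indicator {ω | A ω = 1} Y from e1]
    rw [setIntegral_indicator h1, Set.inter_comm]
  · rw [show (fun ω => (1 - A ω) * c) = Set.indicator {ω | A ω = 0} (fun _ => c) from e0]
    rw [setIntegral_indicator h0, setIntegral_const, Set.inter_comm, smul_eq_mul, mul_comm]
    rfl

lemma aux_split {Ω : Type*} [MeasurableSpace Ω] (P : Measure Ω) [IsFiniteMeasure P]
    (A : Ω → ℝ) (hA : Measurable A) (hA01 : ∀ ω, A ω = 0 ∨ A ω = 1)
    (S : Set Ω) (hS : MeasurableSet S) :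
    (P S).toReal = (P ({ω | A ω = 1} ∩ S)).toReal + (P ({ω | A ω = 0} ∩ S)).toReal := by
  have h1 : MeasurableSet {ω | A ω = 1} := hA (measurableSet_singleton 1)
  have h0 : MeasurableSet {ω | A ω = 0} := hA (measurableSet_singleton 0)
  have hunion : S = ({ω | A ω = 1} ∩ S) ∪ ({ω | A ω = 0} ∩ S) := by
    ext ω
    simp only [Set.mem_union, Set.mem_inter_iff, Set.mem_setOf_eq]
    rcases hA01 ω with h | h <;> simp [h] <;> tauto
  have hdisj : Disjoint ({ω | A ω = 1} ∩ S) ({ω | A ω = 0} ∩ S) := by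
    rw [Set.disjoint_left]
    rintro ω ⟨h1', _⟩ ⟨h0', _⟩
    exact one_ne_zero (h1'.symm.trans h0')
  have hm : P S = P ({ω | A ω = 1} ∩ S) + P ({ω | A ω = 0} ∩ S) := by
    conv_lhs => rw [hunion]
    exact measure_union hdisj (h0.inter hS)
  rw [hm, ENNReal.toReal_add (measure_ne_top P _) (measure_ne_top P _)]

/-- Environment-conditional means of the transformed outcome Ỹ equal the two
cross-environment upper bound b⁺(e,j) as a contrast of conditional means. -/
theorem stmt_15 {Ω : Type*} [MeasurableSpace Ω] (P : Measure Ω) [IsProbabilityMeasure P]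
    (E : Ω → ℕ) (A Y : Ω → ℝ) (e j : ℕ) (s1 s2 : ℝ)
    (hE : Measurable E) (hA : Measurable A) (hA01 : ∀ ω, A ω = 0 ∨ A ω = 1)
    (hY : Integrable Y P) (hYb : ∀ᵐ ω ∂P, s1 ≤ Y ω ∧ Y ω ≤ s2)
    (hej : e ≠ j)
    (δe δj π1e π0j μ1e μ0j : ℝ)
    (hδe : δe = (P {ω | E ω = e}).toReal) (hδj : δj = (P {ω | E ω = j}).toReal)
    (hδe0 : 0 < δe) (hδj0 : 0 < δj)
    (hπ1e : π1e = (P ({ω | A ω = 1} ∩ {ω | E ω = e})).toReal / δe)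
    (hπ0j : π0j = (P ({ω | A ω = 0} ∩ {ω | E ω = j})).toReal / δj)
    (hπ1e0 : 0 < π1e) (hπ1e1 : π1e < 1) (hπ0j0 : 0 < π0j) (hπ0j1 : π0j < 1)
    (hμ1e : μ1e = (∫ ω in {ω | A ω = 1} ∩ {ω | E ω = e}, Y ω ∂P)
        / (P ({ω | A ω = 1} ∩ {ω | E ω = e})).toReal)
    (hμ0j : μ0j = (∫ ω in {ω | A ω = 0} ∩ {ω | E ω = j}, Y ω ∂P)
        / (P ({ω | A ω = 0} ∩ {ω | E ω = j})).toReal)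
    (Yt : Ω → ℝ)
    (hYt : ∀ ω, Yt ω = (if E ω = e then (1 : ℝ) else 0) * (A ω * Y ω + (1 - A ω) * s2)
        + (if E ω = j then (1 : ℝ) else 0) * ((1 - A ω) * Y ω + A ω * s1)) :
    π1e * μ1e + (1 - π1e) * s2 - π0j * μ0j - (1 - π0j) * s1
      = (∫ ω in {ω | E ω = e}, Yt ω ∂P) / δe
        - (∫ ω in {ω | E ω = j}, Yt ω ∂P) / δj := by
  have mSe : MeasurableSet {ω | E ω = e} := hE (measurableSet_singleton e)
  have mSj : MeasurableSet {ω | E ω = j} := hE (measurableSet_singleton j)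
  -- the flipped treatment indicator
  set B : Ω → ℝ := fun ω => 1 - A ω with hB
  have hBmeas : Measurable B := measurable_const.sub hA
  have hB01 : ∀ ω, B ω = 0 ∨ B ω = 1 := by
    intro ω; rcases hA01 ω with h | h
    · right; simp [hB, h]
    · left; simp [hB, h]
  have hBset1 : {ω | B ω = 1} = {ω | A ω = 0} := by
    ext ω; simp only [Set.mem_setOf_eq, hB]; constructor <;> intro h <;> linarith
  have hBset0 : {ω | B ω = 0} = {ω | A ω = 1} := by
    ext ω; simp only [Set.mem_setOf_eq, hB]; constructor <;> intro h <;> linarith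
  -- integral over {E = e}
  have hIe : ∫ ω in {ω | E ω = e}, Yt ω ∂P
      = (∫ ω in {ω | A ω = 1} ∩ {ω | E ω = e}, Y ω ∂P)
        + s2 * (P ({ω | A ω = 0} ∩ {ω | E ω = e})).toReal := by
    rw [setIntegral_congr_fun mSe (g := fun ω => A ω * Y ω + (1 - A ω) * s2)
      (fun ω hω => by
        have he : E ω = e := hω
        have hne : E ω ≠ j := by rw [he]; exact hej
        simp [hYt ω, he, hne, hej])]
    exact aux_int P A Y s2 hA hA01 hY _
  -- integral over {E = j}
  have hIj : ∫ ω in {ω | E ω = j}, Yt ω ∂P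
      = (∫ ω in {ω | A ω = 0} ∩ {ω | E ω = j}, Y ω ∂P)
        + s1 * (P ({ω | A ω = 1} ∩ {ω | E ω = j})).toReal := by
    rw [setIntegral_congr_fun mSj (g := fun ω => B ω * Y ω + (1 - B ω) * s1)
      (fun ω hω => by
        have hjj : E ω = j := hω
        have hne : E ω ≠ e := by rw [hjj]; exact fun h => hej h.symm
        simp only [hYt ω, hjj, hne, if_true, if_false, if_neg (Ne.symm hej), hB]
        ring)]
    rw [aux_int P B Y s1 hBmeas hB01 hY _, hBset1, hBset0]
  -- partitions
  have hparte : δe = (P ({ω | A ω = 1} ∩ {ω | E ω = e})).toReal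
      + (P ({ω | A ω = 0} ∩ {ω | E ω = e})).toReal := by
    rw [hδe]; exact aux_split P A hA hA01 _ mSe
  have hpartj : δj = (P ({ω | A ω = 1} ∩ {ω | E ω = j})).toReal
      + (P ({ω | A ω = 0} ∩ {ω | E ω = j})).toReal := by
    rw [hδj]; exact aux_split P A hA hA01 _ mSj
  -- positivity of denominators
  set pe := (P ({ω | A ω = 1} ∩ {ω | E ω = e})).toReal with hpe
  set qe := (P ({ω | A ω = 0} ∩ {ω | E ω = e})).toReal with hqe
  set rj := (P ({ω | A ω = 1} ∩ {ω | E ω = j})).toReal with hrj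
  set qj := (P ({ω | A ω = 0} ∩ {ω | E ω = j})).toReal with hqj
  have hpe0 : pe ≠ 0 := by
    have : pe = π1e * δe := by rw [hπ1e]; field_simp
    rw [this]; positivity
  have hqj0 : qj ≠ 0 := by
    have : qj = π0j * δj := by rw [hπ0j]; field_simp
    rw [this]; positivity
  have hδe0' : δe ≠ 0 := ne_of_gt hδe0
  have hδj0' : δj ≠ 0 := ne_of_gt hδj0
  rw [hIe, hIj, hμ1e, hμ0j, hπ1e, hπ0j]
  have hqe' : qe = δe - pe := by linarith
  have hrj' : rj = δj - qj := by linarith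
  rw [hqe', hrj']
  field_simp
  ring
end
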